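/- arXiv:1707.02444 — 4 statements merged into one kernel-verified Lean document; each statement's English description precedes it below -/
import Mathlib

section
/- With the notation A_i = W_{i+1}ᵀ···W_{H+1}ᵀ, B_i = W₁ᵀ···W_{i-1}ᵀ, E = (W_{H+1}···W₁X − Y)Xᵀ, and assuming rank(W_{H+1}···W₁) = k = min_i d_i with p a narrowest layer: the tuple (W₁,…,W_{H+1}) is a critical point of L(W) = ½‖W_{H+1}···W₁X − Y‖_F² (i.e., A_i E B_i = 0 for all i) if and only if A_p E = 0 and E B_{p+1} = 0. -/
/-!
Through the narrowest layer the end-to-end product factors as `A₀ = B_p A_p` with inner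
dimension `d_p = k = rank A₀`, so both factors have full rank: `B_p` has a left inverse and
`A_p` a right inverse. Hence `A_p E = 0` follows from `A₀ E = B₁ (A₁ E) = 0` and `E B_p = 0`
from `E A₀ = (E B_H) A_H = 0`, which are the critical-point equations for the first and last
layers. Conversely every `A_{i+1}` with `i < p` factors through `A_p` on the left and every `B_i`
with `i ≥ p` through `B_p` on the right.
-/

open Matrix

namespace Matrix

variable {K l m n : Type*} [Field K] [Fintype l] [Fintype m] [Fintype n] [DecidableEq m]

theorem exists_mul_eq_one_of_rank_eq_card_width (M : Matrix l m K)
    (h : M.rank = Fintype.card m) : ∃ D : Matrix m l K, D * M = 1 := by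
  classical
  have hker : LinearMap.ker M.mulVecLin = ⊥ := by
    have := LinearMap.finrank_range_add_finrank_ker M.mulVecLin
    rw [← Matrix.rank, h, Module.finrank_fintype_fun_eq_card] at this
    exact Submodule.finrank_eq_zero.mp (by omega)
  obtain ⟨g, hg⟩ := M.mulVecLin.exists_leftInverse_of_injective hker
  refine ⟨LinearMap.toMatrix' g, ?_⟩
  have := congrArg LinearMap.toMatrix' hg
  rwa [LinearMap.toMatrix'_comp, LinearMap.toMatrix'_id, ← Matrix.toLin'_apply',
    LinearMap.toMatrix'_toLin'] at this

theorem exists_mul_eq_one_of_rank_eq_card_height (N : Matrix m n K)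
    (h : N.rank = Fintype.card m) : ∃ D : Matrix n m K, N * D = 1 := by
  obtain ⟨D, hD⟩ := exists_mul_eq_one_of_rank_eq_card_width Nᵀ (by rwa [rank_transpose])
  exact ⟨Dᵀ, by rw [← transpose_transpose N, ← transpose_mul, hD, transpose_one]⟩

theorem exists_mul_eq_one_of_rank_mul_eq_card (M : Matrix l m K) (N : Matrix m n K)
    (h : (M * N).rank = Fintype.card m) :
    (∃ D : Matrix m l K, D * M = 1) ∧ ∃ D : Matrix n m K, N * D = 1 :=
  ⟨exists_mul_eq_one_of_rank_eq_card_width M <| le_antisymm (rank_le_card_width M)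
      (h ▸ rank_mul_le_left M N),
    exists_mul_eq_one_of_rank_eq_card_height N <| le_antisymm (rank_le_card_height N)
      (h ▸ rank_mul_le_right M N)⟩

end Matrix

section Chain

variable {R o : Type*} [Semiring R] {d : ℕ → ℕ} {N : ℕ}

theorem exists_eq_mul_of_le_of_forall_eq_mul_succ (A : ∀ i, Matrix (Fin (d i)) o R)
    (hA : ∀ i < N, ∃ M : Matrix (Fin (d i)) (Fin (d (i + 1))) R, A i = M * A (i + 1))
    {i j : ℕ} (hij : i ≤ j) (hj : j ≤ N) :
    ∃ M : Matrix (Fin (d i)) (Fin (d j)) R, A i = M * A j := by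
  induction j, hij using Nat.le_induction with
  | base => exact ⟨1, (Matrix.one_mul _).symm⟩
  | succ j _ ih =>
    obtain ⟨M, hM⟩ := ih (by omega)
    obtain ⟨M', hM'⟩ := hA j (by omega)
    exact ⟨M * M', by rw [hM, hM', Matrix.mul_assoc]⟩

theorem exists_eq_mul_of_le_of_forall_succ_eq_mul (B : ∀ i, Matrix o (Fin (d i)) R)
    (hB : ∀ i < N, ∃ M : Matrix (Fin (d i)) (Fin (d (i + 1))) R, B (i + 1) = B i * M)
    {i j : ℕ} (hij : i ≤ j) (hj : j ≤ N) :
    ∃ M : Matrix (Fin (d i)) (Fin (d j)) R, B j = B i * M := by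
  induction j, hij using Nat.le_induction with
  | base => exact ⟨1, (Matrix.mul_one _).symm⟩
  | succ j _ ih =>
    obtain ⟨M, hM⟩ := ih (by omega)
    obtain ⟨M', hM'⟩ := hB j (by omega)
    exact ⟨M * M', by rw [hM', hM, Matrix.mul_assoc]⟩

end Chain

theorem eq_mul_of_forall_eq_transpose_mul {R : Type*} [Semiring R] {d : ℕ → ℕ} {H : ℕ}
    (W : ∀ i : ℕ, Matrix (Fin (d (i + 1))) (Fin (d i)) R)
    (A : ∀ i : ℕ, Matrix (Fin (d i)) (Fin (d (H + 1))) R)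
    (B : ∀ i : ℕ, Matrix (Fin (d 0)) (Fin (d i)) R)
    (hA : ∀ i ≤ H, A i = (W i)ᵀ * A (i + 1)) (hB0 : B 0 = 1)
    (hB : ∀ i ≤ H, B (i + 1) = B i * (W i)ᵀ) {i : ℕ} (hi : i ≤ H + 1) :
    A 0 = B i * A i := by
  induction i with
  | zero => rw [hB0, Matrix.one_mul]
  | succ i ih => rw [hB i (by omega), Matrix.mul_assoc, ← hA i (by omega), ih (by omega)]

theorem critical_point_iff_general
    {H : ℕ} {d : ℕ → ℕ} (k p : ℕ)
    (hpH : p ≤ H) (hdp : d p = k)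
    (W : ∀ i : ℕ, Matrix (Fin (d (i + 1))) (Fin (d i)) ℝ)
    (A : ∀ i : ℕ, Matrix (Fin (d i)) (Fin (d (H + 1))) ℝ)
    (B : ∀ i : ℕ, Matrix (Fin (d 0)) (Fin (d i)) ℝ)
    (hAtop : A (H + 1) = 1)
    (hA : ∀ i ≤ H, A i = (W i)ᵀ * A (i + 1))
    (hB0 : B 0 = 1)
    (hB : ∀ i ≤ H, B (i + 1) = B i * (W i)ᵀ)
    (hrank : ((A 0)ᵀ).rank = k)
    (E : Matrix (Fin (d (H + 1))) (Fin (d 0)) ℝ) :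
    (∀ i ≤ H, A (i + 1) * E * B i = 0) ↔ (A p * E = 0 ∧ E * B p = 0) := by
  have hfac : ∀ {i}, i ≤ H + 1 → A 0 = B i * A i :=
    eq_mul_of_forall_eq_transpose_mul W A B hA hB0 hB
  constructor
  · intro hcrit
    obtain ⟨⟨D, hD⟩, ⟨D', hD'⟩⟩ := exists_mul_eq_one_of_rank_mul_eq_card (B p) (A p)
      (by rw [← hfac (by omega), ← rank_transpose, hrank, Fintype.card_fin, hdp])
    have hA0E : A 0 * E = 0 := by
      have hfirst := hcrit 0 (Nat.zero_le H)
      rw [hB0, Matrix.mul_one] at hfirst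
      rw [hfac (i := 1) (by omega), Matrix.mul_assoc, hfirst, Matrix.mul_zero]
    have hEA0 : E * A 0 = 0 := by
      have hlast := hcrit H le_rfl
      rw [hAtop, Matrix.one_mul] at hlast
      rw [hfac (i := H) (by omega), ← Matrix.mul_assoc, hlast, Matrix.zero_mul]
    constructor
    · calc A p * E = D * (B p * A p * E) := by
            rw [← Matrix.mul_assoc, ← Matrix.mul_assoc, hD, Matrix.one_mul]
        _ = 0 := by rw [← hfac (by omega), hA0E, Matrix.mul_zero]
    · calc E * B p = E * (B p * A p) * D' := by
            rw [Matrix.mul_assoc, Matrix.mul_assoc, hD', Matrix.mul_one]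
        _ = 0 := by rw [← hfac (by omega), hEA0, Matrix.zero_mul]
  · rintro ⟨hApE, hEBp⟩ i hi
    rcases le_or_gt (i + 1) p with hip | hpi
    · obtain ⟨M, hM⟩ := exists_eq_mul_of_le_of_forall_eq_mul_succ (N := H) A
        (fun j hj => ⟨_, hA j (by omega)⟩) hip (by omega)
      rw [hM, Matrix.mul_assoc M, hApE, Matrix.mul_zero, Matrix.zero_mul]
    · obtain ⟨M, hM⟩ := exists_eq_mul_of_le_of_forall_succ_eq_mul (N := H) B
        (fun j hj => ⟨_, hB j (by omega)⟩) (Nat.le_of_lt_succ hpi) hi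
      rw [hM, ← Matrix.mul_assoc, Matrix.mul_assoc _ E, hEBp, Matrix.mul_zero, Matrix.zero_mul]

/-- Criticality criterion: with layers indexed `0,…,H` (`W i` is the paper's `W_{i+1}`),
`A i` the paper's `A_i = W_{i+1}ᵀ···W_{H+1}ᵀ` and `B (i-1)` the paper's
`B_i = W₁ᵀ···W_{i-1}ᵀ` (characterized by recurrences), `E = (W_{H+1}···W₁X − Y)Xᵀ`,
and assuming the full product `(A 0)ᵀ` has rank `k = min_i d_i` (attained at a hidden
layer `p`, `1 ≤ p ≤ H`), the tuple is a critical point of `L` (i.e. `A_i E B_i = 0`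
for all `i`) iff `A_p E = 0` and `E B_{p+1} = 0`. -/
theorem critical_point_iff
    {H m : ℕ} {d : ℕ → ℕ} (k p : ℕ)
    (hp1 : 1 ≤ p) (hpH : p ≤ H) (hdp : d p = k) (hmin : ∀ i ≤ H + 1, k ≤ d i)
    (hk : k < min (d 0) (d (H + 1)))
    (W : ∀ i : ℕ, Matrix (Fin (d (i + 1))) (Fin (d i)) ℝ)
    (X : Matrix (Fin (d 0)) (Fin m) ℝ) (Y : Matrix (Fin (d (H + 1))) (Fin m) ℝ)
    (A : ∀ i : ℕ, Matrix (Fin (d i)) (Fin (d (H + 1))) ℝ)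
    (B : ∀ i : ℕ, Matrix (Fin (d 0)) (Fin (d i)) ℝ)
    (hAtop : A (H + 1) = 1)
    (hA : ∀ i ≤ H, A i = (W i)ᵀ * A (i + 1))
    (hB0 : B 0 = 1)
    (hB : ∀ i ≤ H, B (i + 1) = B i * (W i)ᵀ)
    (hrank : ((A 0)ᵀ).rank = k)
    (E : Matrix (Fin (d (H + 1))) (Fin (d 0)) ℝ)
    (hE : E = ((A 0)ᵀ * X - Y) * Xᵀ) :
    (∀ i ≤ H, A (i + 1) * E * B i = 0) ↔ (A p * E = 0 ∧ E * B p = 0) :=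
  critical_point_iff_general k p hpH hdp W A B hAtop hA hB0 hB hrank E
end

section
/- Let A_p ∈ ℝ^{k×d_y} have rank k and B_{p+1} ∈ ℝ^{d_x×k}, with X ∈ ℝ^{d_x×m}, XXᵀ invertible, Y ∈ ℝ^{d_y×m}. If A_p(A_pᵀB_{p+1}ᵀX − Y)Xᵀ = 0, then B_{p+1}ᵀ = (A_pA_pᵀ)⁻¹A_pYXᵀ(XXᵀ)⁻¹, and consequently A_pᵀB_{p+1}ᵀ = A_pᵀ(A_pA_pᵀ)⁻¹A_pYXᵀ(XXᵀ)⁻¹. -/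
open Matrix

lemma isUnit_of_rank_eq_card {n : ℕ} (M : Matrix (Fin n) (Fin n) ℝ)
    (h : M.rank = n) : IsUnit M := by
  rw [← Matrix.mulVec_surjective_iff_isUnit]
  have : LinearMap.range M.mulVecLin = ⊤ := by
    apply Submodule.eq_top_of_finrank_eq
    rw [← Matrix.rank, h]
    simp
  intro y
  exact (LinearMap.range_eq_top.mp this) y

/-- If `A_p ∈ ℝ^{k×d_y}` has rank `k`, `XXᵀ` is invertible, and
`A_p(A_pᵀB_{p+1}ᵀX − Y)Xᵀ = 0`, then `B_{p+1}ᵀ = (A_pA_pᵀ)⁻¹A_pYXᵀ(XXᵀ)⁻¹`, hence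
`A_pᵀB_{p+1}ᵀ = A_pᵀ(A_pA_pᵀ)⁻¹A_pYXᵀ(XXᵀ)⁻¹`. -/
theorem B_determined_by_criticality
    {k dx dy m : ℕ} (hkx : k ≤ dx) (hky : k ≤ dy)
    (A : Matrix (Fin k) (Fin dy) ℝ) (B : Matrix (Fin dx) (Fin k) ℝ)
    (X : Matrix (Fin dx) (Fin m) ℝ) (Y : Matrix (Fin dy) (Fin m) ℝ)
    (hX : IsUnit (X * Xᵀ))
    (hA : A.rank = k)
    (hcrit : A * (Aᵀ * Bᵀ * X - Y) * Xᵀ = 0) :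
    Bᵀ = (A * Aᵀ)⁻¹ * A * Y * Xᵀ * (X * Xᵀ)⁻¹ ∧
    Aᵀ * Bᵀ = Aᵀ * (A * Aᵀ)⁻¹ * A * Y * Xᵀ * (X * Xᵀ)⁻¹ := by
  have hAA : IsUnit (A * Aᵀ) := by
    apply isUnit_of_rank_eq_card
    rw [Matrix.rank_self_mul_transpose, hA]
  have hAAdet : IsUnit (A * Aᵀ).det := (Matrix.isUnit_iff_isUnit_det _).mp hAA
  have hXdet : IsUnit (X * Xᵀ).det := (Matrix.isUnit_iff_isUnit_det _).mp hX
  have key : A * Aᵀ * Bᵀ * (X * Xᵀ) = A * Y * Xᵀ := by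
    have h2 := hcrit
    rw [Matrix.mul_sub, Matrix.sub_mul, sub_eq_zero] at h2
    calc A * Aᵀ * Bᵀ * (X * Xᵀ) = A * (Aᵀ * Bᵀ * X) * Xᵀ := by
          simp only [Matrix.mul_assoc]
      _ = A * Y * Xᵀ := h2
  have hB' : Bᵀ = (A * Aᵀ)⁻¹ * (A * Y * Xᵀ) * (X * Xᵀ)⁻¹ := by
    rw [← key, ← Matrix.mul_assoc ((A * Aᵀ)⁻¹) (A * Aᵀ * Bᵀ) (X * Xᵀ),
      Matrix.mul_nonsing_inv_cancel_right _ _ hXdet,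
      Matrix.nonsing_inv_mul_cancel_left _ _ hAAdet]
  have hB : Bᵀ = (A * Aᵀ)⁻¹ * A * Y * Xᵀ * (X * Xᵀ)⁻¹ := by
    simpa [Matrix.mul_assoc] using hB'
  exact ⟨hB, by rw [hB]; simp [Matrix.mul_assoc]⟩
end

section
/- Consider L(W₁,…,W_{H+1}) = ½‖W_{H+1}···W₁X − Y‖_F² with all hidden widths d_i ≥ d_y ≤ d_x, XXᵀ invertible. Fix ε > 0. If (W₁,…,W_{H+1}) is a critical point of L and σ_min(W_{H+1}···W₂) ≥ ε, then W_{H+1}···W₁ = YXᵀ(XXᵀ)⁻¹, and hence (W₁,…,W_{H+1}) is a global minimum of L. -/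
open Matrix

/-- Squared Frobenius norm of a real matrix. -/
noncomputable def frobSq {m n : ℕ} (A : Matrix (Fin m) (Fin n) ℝ) : ℝ :=
  ∑ i, ∑ j, (A i j) ^ 2

/-- The smallest singular value of a wide matrix `M : ℝ^{n×l}` (with `n ≤ l`), computed as
the square root of the smallest eigenvalue of `M * Mᵀ`. -/
noncomputable def sigmaMinRows {n l : ℕ} (M : Matrix (Fin n) (Fin l) ℝ) : ℝ :=
  Real.sqrt (⨅ i, (Matrix.isHermitian_mul_conjTranspose_self M).eigenvalues i)

lemma frobSq_nonneg {m n : ℕ} (A : Matrix (Fin m) (Fin n) ℝ) : 0 ≤ frobSq A := by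
  apply Finset.sum_nonneg; intro i _
  exact Finset.sum_nonneg fun j _ => sq_nonneg _

lemma frobSq_add {m n : ℕ} (P Q : Matrix (Fin m) (Fin n) ℝ) :
    frobSq (P + Q) = frobSq P + frobSq Q + 2 * Matrix.trace (P * Qᵀ) := by
  simp only [frobSq, Matrix.trace, Matrix.mul_apply, Matrix.diag, Matrix.add_apply,
    Matrix.transpose_apply]
  rw [Finset.mul_sum, ← Finset.sum_add_distrib, ← Finset.sum_add_distrib]
  congr 1; funext i
  rw [Finset.mul_sum, ← Finset.sum_add_distrib, ← Finset.sum_add_distrib]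
  congr 1; funext j
  ring

/-- Case `d_y ≤ d_x`, all widths `≥ d_y`: a critical point of
`L(W) = ½‖W_{H+1}···W₁X − Y‖_F²` with `σ_min(W_{H+1}···W₂) ≥ ε > 0` satisfies
`W_{H+1}···W₁ = YXᵀ(XXᵀ)⁻¹` and is a global minimum of `L`.
Layers are indexed `0,…,H` (`W i` is the paper's `W_{i+1}`); the suffix transposed
products `A i = W_{i+1}ᵀ···W_{H+1}ᵀ` and prefix transposed products `B i = W₁ᵀ···W_iᵀ`
are characterized by their recurrences, so `(A 0)ᵀ = W_{H+1}···W₁`,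
`(A 1)ᵀ = W_{H+1}···W₂`, and criticality reads `A (i+1) E B i = 0` for all `i`. -/
theorem critical_point_is_global_min_dy_le_dx
    {H m : ℕ} {d : ℕ → ℕ}
    (hdyx : d (H + 1) ≤ d 0) (hdxm : d 0 ≤ m)
    (hwide : ∀ i ≤ H + 1, d (H + 1) ≤ d i)
    (X : Matrix (Fin (d 0)) (Fin m) ℝ) (Y : Matrix (Fin (d (H + 1))) (Fin m) ℝ)
    (hX : IsUnit (X * Xᵀ))
    (W : ∀ i : ℕ, Matrix (Fin (d (i + 1))) (Fin (d i)) ℝ)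
    (A : ∀ i : ℕ, Matrix (Fin (d i)) (Fin (d (H + 1))) ℝ)
    (B : ∀ i : ℕ, Matrix (Fin (d 0)) (Fin (d i)) ℝ)
    (hAtop : A (H + 1) = 1)
    (hA : ∀ i ≤ H, A i = (W i)ᵀ * A (i + 1))
    (hB0 : B 0 = 1)
    (hB : ∀ i ≤ H, B (i + 1) = B i * (W i)ᵀ)
    (ε : ℝ) (hε : 0 < ε)
    (hsigma : sigmaMinRows ((A 1)ᵀ) ≥ ε)
    (hcrit : ∀ i ≤ H, A (i + 1) * (((A 0)ᵀ * X - Y) * Xᵀ) * B i = 0) :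
    (A 0)ᵀ = Y * Xᵀ * (X * Xᵀ)⁻¹ ∧
    (∀ (V : ∀ i : ℕ, Matrix (Fin (d (i + 1))) (Fin (d i)) ℝ)
       (A' : ∀ i : ℕ, Matrix (Fin (d i)) (Fin (d (H + 1))) ℝ),
        A' (H + 1) = 1 →
        (∀ i ≤ H, A' i = (V i)ᵀ * A' (i + 1)) →
        (1 / 2 : ℝ) * frobSq ((A 0)ᵀ * X - Y) ≤
          (1 / 2 : ℝ) * frobSq ((A' 0)ᵀ * X - Y)) := by
  -- Notation
  set E : Matrix (Fin (d (H + 1))) (Fin (d 0)) ℝ := ((A 0)ᵀ * X - Y) * Xᵀ with hE_def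
  -- Step 1: A 1 * E = 0 from criticality at i = 0
  have h0 : A 1 * E = 0 := by
    have := hcrit 0 (Nat.zero_le H)
    rwa [hB0, Matrix.mul_one] at this
  -- Step 2: (A 1)ᵀ * A 1 is invertible because its eigenvalues are ≥ ε²
  have hHerm := Matrix.isHermitian_mul_conjTranspose_self ((A 1)ᵀ)
  have hG : (A 1)ᵀ * ((A 1)ᵀ)ᴴ = (A 1)ᵀ * A 1 := by
    have h : ((A 1)ᵀ)ᴴ = A 1 := by ext i j; simp [Matrix.conjTranspose_apply]
    rw [h]
  have hinf : ε ^ 2 ≤ ⨅ i, hHerm.eigenvalues i := (Real.le_sqrt' hε).mp hsigma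
  have heig : ∀ i, 0 < hHerm.eigenvalues i := by
    intro i
    have hb : BddBelow (Set.range hHerm.eigenvalues) := (Set.finite_range _).bddBelow
    have := ciInf_le hb i
    nlinarith [this, hinf, sq_nonneg ε]
  have hdet : IsUnit ((A 1)ᵀ * ((A 1)ᵀ)ᴴ).det := by
    rw [hHerm.det_eq_prod_eigenvalues]
    refine (Finset.prod_pos fun i _ => ?_).ne'.isUnit
    exact_mod_cast heig i
  -- Step 3: E = 0
  have hE0 : E = 0 := by
    have hGE : ((A 1)ᵀ * ((A 1)ᵀ)ᴴ) * E = 0 := by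
      rw [hG, Matrix.mul_assoc, h0, Matrix.mul_zero]
    calc E = (((A 1)ᵀ * ((A 1)ᵀ)ᴴ)⁻¹ * ((A 1)ᵀ * ((A 1)ᵀ)ᴴ)) * E := by
            rw [Matrix.nonsing_inv_mul _ hdet, Matrix.one_mul]
      _ = ((A 1)ᵀ * ((A 1)ᵀ)ᴴ)⁻¹ * (((A 1)ᵀ * ((A 1)ᵀ)ᴴ) * E) := by rw [Matrix.mul_assoc]
      _ = 0 := by rw [hGE, Matrix.mul_zero]
  -- Step 4: (A 0)ᵀ = Y Xᵀ (X Xᵀ)⁻¹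
  have hdetX : IsUnit (X * Xᵀ).det := (Matrix.isUnit_iff_isUnit_det _).mp hX
  have hnorm : (A 0)ᵀ * (X * Xᵀ) = Y * Xᵀ := by
    have : (A 0)ᵀ * X * Xᵀ - Y * Xᵀ = 0 := by
      rw [← Matrix.sub_mul]; exact hE0
    rw [← Matrix.mul_assoc]
    linear_combination (norm := abel) this
  have hmain : (A 0)ᵀ = Y * Xᵀ * (X * Xᵀ)⁻¹ := by
    calc (A 0)ᵀ = (A 0)ᵀ * 1 := (Matrix.mul_one _).symm
      _ = (A 0)ᵀ * ((X * Xᵀ) * (X * Xᵀ)⁻¹) := by rw [Matrix.mul_nonsing_inv _ hdetX]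
      _ = ((A 0)ᵀ * (X * Xᵀ)) * (X * Xᵀ)⁻¹ := (Matrix.mul_assoc _ _ _).symm
      _ = Y * Xᵀ * (X * Xᵀ)⁻¹ := by rw [hnorm]
  refine ⟨hmain, ?_⟩
  -- Step 5: global minimality
  intro V A' _ _
  set R0 := (A 0)ᵀ
  set R := (A' 0)ᵀ
  have hC : (R0 * X - Y) * Xᵀ = 0 := hE0
  have hXC : X * (R0 * X - Y)ᵀ = 0 := by
    have := congrArg Matrix.transpose hC
    rwa [Matrix.transpose_mul, Matrix.transpose_transpose, Matrix.transpose_zero] at this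
  have hsplit : R * X - Y = (R - R0) * X + (R0 * X - Y) := by
    rw [Matrix.sub_mul]; abel
  have htr : Matrix.trace ((R - R0) * X * (R0 * X - Y)ᵀ) = 0 := by
    rw [Matrix.mul_assoc, hXC, Matrix.mul_zero, Matrix.trace_zero]
  have hexp : frobSq (R * X - Y)
      = frobSq ((R - R0) * X) + frobSq (R0 * X - Y) := by
    rw [hsplit, frobSq_add, htr]; ring
  have := frobSq_nonneg ((R - R0) * X)
  nlinarith [hexp, this]
end

section
/- Matrix factorization as a two-layer linear network: let X ∈ ℝ^{d_x×m} with XXᵀ invertible, Y ∈ ℝ^{d_y×m}, and suppose d₁ ≥ min{d_x, d_y} = k with k = min{d_x,d_y}. If (W₁, W₂) ∈ ℝ^{d₁×d_x} × ℝ^{d_y×d₁} is a critical point of L(W₁,W₂) = ½‖W₂W₁X − Y‖_F² and rank(W₂W₁) = k, then W₂W₁X Xᵀ = YXᵀ, i.e., W₂W₁ = YXᵀ(XXᵀ)⁻¹ when k = min{d_x,d_y} with d_y ≤ d_x. -/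
open Matrix

/-- Matrix factorization as a two-layer linear network: with `d_y ≤ d_x`, `d₁ ≥ d_y`,
`XXᵀ` invertible, if `(W₁, W₂)` is a critical point of `L = ½‖W₂W₁X − Y‖_F²` (i.e.
`W₂ᵀ(W₂W₁X−Y)Xᵀ = 0` and `(W₂W₁X−Y)XᵀW₁ᵀ = 0`) and `rank(W₂W₁) = d_y = min{d_x,d_y}`,
then `W₂W₁XXᵀ = YXᵀ`, i.e. `W₂W₁ = YXᵀ(XXᵀ)⁻¹`. -/
theorem two_layer_critical_point
    {dx dy d1 m : ℕ} (hdyx : dy ≤ dx) (hd1 : dy ≤ d1)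
    (X : Matrix (Fin dx) (Fin m) ℝ) (Y : Matrix (Fin dy) (Fin m) ℝ)
    (hX : IsUnit (X * Xᵀ))
    (W1 : Matrix (Fin d1) (Fin dx) ℝ) (W2 : Matrix (Fin dy) (Fin d1) ℝ)
    (hcrit1 : W2ᵀ * (W2 * W1 * X - Y) * Xᵀ = 0)
    (hcrit2 : (W2 * W1 * X - Y) * Xᵀ * W1ᵀ = 0)
    (hrank : (W2 * W1).rank = dy) :
    W2 * W1 * X * Xᵀ = Y * Xᵀ ∧ W2 * W1 = Y * Xᵀ * (X * Xᵀ)⁻¹ := by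
  -- W2 has full row rank
  have hr2 : W2.rank = dy := by
    have h1 := Matrix.rank_mul_le_left W2 W1
    have h2 := W2.rank_le_card_height
    simp only [Fintype.card_fin] at h2
    omega
  -- hence mulVec surjective, so it has a right inverse
  have hsurj : Function.Surjective W2.mulVec := by
    have htop : LinearMap.range W2.mulVecLin = ⊤ := by
      apply Submodule.eq_top_of_finrank_eq
      rw [show Module.finrank ℝ (LinearMap.range W2.mulVecLin) = W2.rank from rfl, hr2,
        Module.finrank_fintype_fun_eq_card, Fintype.card_fin]
    intro y
    obtain ⟨v, hv⟩ := LinearMap.range_eq_top.mp htop y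
    exact ⟨v, hv⟩
  obtain ⟨B, hB⟩ := Matrix.mulVec_surjective_iff_exists_right_inverse.mp hsurj
  have h2 : Bᵀ * W2ᵀ = 1 := by rw [← Matrix.transpose_mul, hB, Matrix.transpose_one]
  have hzero : (W2 * W1 * X - Y) * Xᵀ = 0 := by
    calc (W2 * W1 * X - Y) * Xᵀ
        = (Bᵀ * W2ᵀ) * ((W2 * W1 * X - Y) * Xᵀ) := by rw [h2, Matrix.one_mul]
      _ = Bᵀ * (W2ᵀ * (W2 * W1 * X - Y) * Xᵀ) := by
          rw [Matrix.mul_assoc, ← Matrix.mul_assoc W2ᵀ]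
      _ = 0 := by rw [hcrit1, Matrix.mul_zero]
  have key : W2 * W1 * X * Xᵀ = Y * Xᵀ := by
    rw [Matrix.sub_mul] at hzero
    exact sub_eq_zero.mp hzero
  refine ⟨key, ?_⟩
  have hdet : IsUnit (X * Xᵀ).det := (Matrix.isUnit_iff_isUnit_det _).mp hX
  calc W2 * W1 = W2 * W1 * ((X * Xᵀ) * (X * Xᵀ)⁻¹) := by
        rw [Matrix.mul_nonsing_inv _ hdet, Matrix.mul_one]
    _ = W2 * W1 * X * Xᵀ * (X * Xᵀ)⁻¹ := by
        rw [← Matrix.mul_assoc, ← Matrix.mul_assoc]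
    _ = Y * Xᵀ * (X * Xᵀ)⁻¹ := by rw [key]
end
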